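/- arXiv:2506.11663 — 2 statements merged into one kernel-verified Lean document; each statement's English description precedes it below -/
import Mathlib

section
/- Let F : ℝ → [0,1] be a continuously differentiable, strictly increasing distribution function with strictly positive density f on a neighborhood of y_τ = F^{−1}(τ) for τ ∈ (0,1). Then the quantile functional Q_τ is Hadamard differentiable at F tangentially to functions h continuous at y_τ, with derivative Q_τ'_F(h) = −h(y_τ)/f(y_τ). -/
open Filter Topology

/-- Hadamard differentiability of the quantile functional
`Q_τ(F) = inf{w : F w ≥ τ}` at a distribution function `F` with continuous
strictly positive density `f` near `y_τ = Q_τ(F)`, tangentially to directions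
`h` continuous at `y_τ`: for any path `h_δ → h` uniformly with `F + δ h_δ` a
distribution function for small `δ`, the difference quotient converges to
`−h(y_τ)/f(y_τ)`. -/
theorem quantile_hadamard_differentiable
    (τ : ℝ) (hτ : τ ∈ Set.Ioo (0:ℝ) 1)
    (Q : (ℝ → ℝ) → ℝ) (hQdef : ∀ G : ℝ → ℝ, Q G = sInf {w : ℝ | τ ≤ G w})
    (F f : ℝ → ℝ)
    (hF_deriv : ∀ x, HasDerivAt F (f x) x) (hf_cont : Continuous f)
    (hF_strictMono : StrictMono F)
    (hF_bot : Tendsto F atBot (𝓝 0)) (hF_top : Tendsto F atTop (𝓝 1))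
    (hf_pos : ∃ ε > (0:ℝ), ∀ y ∈ Metric.ball (Q F) ε, 0 < f y)
    (h : ℝ → ℝ) (hh_cont : ContinuousAt h (Q F))
    (H : ℝ → ℝ → ℝ)
    (hH_unif : TendstoUniformly H h (𝓝[≠] (0:ℝ)))
    (hH_admissible : ∀ᶠ δ in 𝓝[≠] (0:ℝ),
      Monotone (fun x => F x + δ * H δ x) ∧
      Tendsto (fun x => F x + δ * H δ x) atBot (𝓝 0) ∧
      Tendsto (fun x => F x + δ * H δ x) atTop (𝓝 1)) :
    Tendsto (fun δ => (Q (fun x => F x + δ * H δ x) - Q F) / δ)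
      (𝓝[≠] (0:ℝ)) (𝓝 (-(h (Q F)) / f (Q F))) := by
  classical
  obtain ⟨ε₀, hε₀, hfpos⟩ := hf_pos
  set y := Q F with hy
  have hfy : 0 < f y := hfpos y (by simp [Metric.mem_ball, hε₀])
  have hFdiff : Differentiable ℝ F := fun x => (hF_deriv x).differentiableAt
  have hFc : Continuous F := hFdiff.continuous
  -- F y = τ
  have hFy : F y = τ := by
    obtain ⟨a, ha⟩ := (hF_bot.eventually_lt_const hτ.1).exists
    obtain ⟨b, hb⟩ := (hF_top.eventually_const_lt hτ.2).exists
    obtain ⟨y₀, hy₀⟩ : τ ∈ Set.range F := intermediate_value_univ a b hFc ⟨ha.le, hb.le⟩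
    have hset : {w : ℝ | τ ≤ F w} = Set.Ici y₀ := by
      ext w
      simp [← hy₀, hF_strictMono.le_iff_le, Set.mem_Ici]
    have : y = y₀ := by rw [hy, hQdef, hset, csInf_Ici]
    rw [this, hy₀]
  set c : ℝ := -(h y) / f y with hc
  -- key auxiliary limit
  have key : ∀ a : ℝ, Tendsto (fun δ => (F (y + δ * a) + δ * H δ (y + δ * a) - τ) / δ)
      (𝓝[≠] (0:ℝ)) (𝓝 (f y * a + h y)) := by
    intro a
    have hg : HasDerivAt (fun δ : ℝ => y + δ * a) a 0 := by
      simpa using ((hasDerivAt_id (0:ℝ)).mul_const a).const_add y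
    have hchain : HasDerivAt (fun δ : ℝ => F (y + δ * a)) (f y * a) 0 := by
      have := (hF_deriv (y + 0 * a)).comp 0 hg
      simpa [Function.comp_def] using this
    have h1 : Tendsto (fun δ => (F (y + δ * a) - F y) / δ) (𝓝[≠] (0:ℝ)) (𝓝 (f y * a)) := by
      have := hasDerivAt_iff_tendsto_slope.mp hchain
      refine this.congr fun δ => ?_
      simp [slope_def_field]
    have htend : Tendsto (fun δ : ℝ => y + δ * a) (𝓝[≠] (0:ℝ)) (𝓝 y) := by
      have hc2 : Continuous (fun δ : ℝ => y + δ * a) :=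
        continuous_const.add (continuous_id.mul continuous_const)
      have : Tendsto (fun δ : ℝ => y + δ * a) (𝓝 (0:ℝ)) (𝓝 y) := by
        simpa using hc2.tendsto (0:ℝ)
      exact this.mono_left nhdsWithin_le_nhds
    have h2 : Tendsto (fun δ => H δ (y + δ * a)) (𝓝[≠] (0:ℝ)) (𝓝 (h y)) :=
      hH_unif.tendsto_comp hh_cont htend
    have := h1.add h2
    refine this.congr' ?_
    filter_upwards [self_mem_nhdsWithin] with δ hδ
    have hδ' : δ ≠ 0 := hδ
    field_simp [hFy]
    linarith [hFy]
  rw [Metric.tendsto_nhds]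
  intro ε hε
  have hε' : 0 < ε / 2 := by linarith
  have hlimp : 0 < f y * (c + ε / 2) + h y := by
    have : f y * c = -(h y) := by
      rw [hc, mul_div_assoc', mul_div_right_comm, div_self hfy.ne', one_mul]
    nlinarith
  have hlimn : f y * (c - ε / 2) + h y < 0 := by
    have : f y * c = -(h y) := by
      rw [hc, mul_div_assoc', mul_div_right_comm, div_self hfy.ne', one_mul]
    nlinarith
  have E2 := (key (c + ε / 2)).eventually (eventually_gt_nhds hlimp)
  have E3 := (key (c - ε / 2)).eventually (eventually_lt_nhds hlimn)
  filter_upwards [E2, E3, hH_admissible, self_mem_nhdsWithin] with δ h2 h3 hadm hδne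
  have hδ' : δ ≠ 0 := hδne
  set G : ℝ → ℝ := fun x => F x + δ * H δ x with hG
  have hmono : Monotone G := hadm.1
  set w₁ : ℝ := y + δ * (c + ε / 2) with hw₁
  set w₂ : ℝ := y + δ * (c - ε / 2) with hw₂
  have hQG : Q G = sInf {w : ℝ | τ ≤ G w} := hQdef G
  clear_value y c G w₁ w₂
  have hsandwich : c - ε / 2 ≤ (Q G - y) / δ ∧ (Q G - y) / δ ≤ c + ε / 2 := by
    rcases div_pos_iff.mp h2 with ⟨hA, hδpos⟩ | ⟨hA, hδneg⟩
    · -- δ > 0 : G w₁ ≥ τ, G w₂ < τ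
      rcases div_neg_iff.mp h3 with ⟨hB, hδneg⟩ | ⟨hB, _⟩
      · exact absurd hδpos (not_lt.mpr hδneg.le)
      have hw₁mem : w₁ ∈ {w : ℝ | τ ≤ G w} := by
        simp only [Set.mem_setOf_eq, hG]
        linarith
      have hlb : ∀ s ∈ {w : ℝ | τ ≤ G w}, w₂ ≤ s := by
        intro s hs
        by_contra hlt
        push_neg at hlt
        have hmle := hmono hlt.le
        simp only [Set.mem_setOf_eq, hG] at hs hmle
        linarith
      have hle : Q G ≤ w₁ := by
        rw [hQG]; exact csInf_le ⟨w₂, hlb⟩ hw₁mem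
      have hge : w₂ ≤ Q G := by
        rw [hQG]; exact le_csInf ⟨w₁, hw₁mem⟩ hlb
      constructor
      · rw [le_div_iff₀ hδpos]; nlinarith
      · rw [div_le_iff₀ hδpos]; nlinarith
    · -- δ < 0 : G w₁ < τ, G w₂ ≥ τ
      rcases div_neg_iff.mp h3 with ⟨hB, _⟩ | ⟨hB, hδpos⟩
      swap
      · exact absurd hδpos (not_lt.mpr hδneg.le)
      have hw₂mem : w₂ ∈ {w : ℝ | τ ≤ G w} := by
        simp only [Set.mem_setOf_eq, hG]
        linarith
      have hlb : ∀ s ∈ {w : ℝ | τ ≤ G w}, w₁ ≤ s := by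
        intro s hs
        by_contra hlt
        push_neg at hlt
        have hmle := hmono hlt.le
        simp only [Set.mem_setOf_eq, hG] at hs hmle
        linarith
      have hle : Q G ≤ w₂ := by
        rw [hQG]; exact csInf_le ⟨w₁, hlb⟩ hw₂mem
      have hge : w₁ ≤ Q G := by
        rw [hQG]; exact le_csInf ⟨w₂, hw₂mem⟩ hlb
      constructor
      · rw [le_div_iff_of_neg hδneg]; nlinarith
      · rw [div_le_iff_of_neg hδneg]; nlinarith
  rw [Real.dist_eq, abs_lt]
  obtain ⟨hl, hr⟩ := hsandwich
  constructor <;> linarith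
end

section
/- Let ε be ℝ-valued with conditional density f_{ε|X}(e|x) continuous in x on an interval I for each e, and let h : I × ℝ → ℝ be such that e ↦ h(x,e) is continuously differentiable, strictly increasing with ∂_e h(x,e) ≥ c > 0, and x ↦ h(x,e) and x ↦ ∂_e h(x,e) continuous for each e. Then Y = h(X, ε) has a conditional density given X = x equal to f_{Y|X}(y|x) = f_{ε|X}(h^{−1}(x,y)|x) / ∂_e h(x, h^{−1}(x,y)), and (y,x) ↦ f_{Y|X}(y|x) is continuous provided f_{ε|X} is jointly continuous. -/
open MeasureTheory

/-- 1D lintegral change of variables. -/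
theorem lintegral_image_eq_lintegral_abs_deriv_mul' {s : Set ℝ} {f : ℝ → ℝ} {f' : ℝ → ℝ}
    (hs : MeasurableSet s) (hf' : ∀ x ∈ s, HasDerivWithinAt f (f' x) s x)
    (hf : Set.InjOn f s) (g : ℝ → ENNReal) :
    ∫⁻ x in f '' s, g x = ∫⁻ x in s, ENNReal.ofReal |f' x| * g (f x) := by
  simpa only [ContinuousLinearMap.det_toSpanSingleton] using
    lintegral_image_eq_lintegral_abs_det_fderiv_mul volume hs
      (fun x hx => (hf' x hx).hasFDerivWithinAt) hf g

/-- Conditional density of `Y = h(X,ε)` under a strictly monotone smooth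
transformation of a scalar error: if `e ↦ h(x,e)` is continuously
differentiable, strictly increasing with `∂ₑh(x,e) ≥ c > 0`, and everything is
suitably continuous, then the conditional density of `Y` given `X = x` is
`f_{Y|X}(y|x) = f_{ε|X}(h⁻¹(x,y)|x)/∂ₑh(x,h⁻¹(x,y))`, and `(y,x) ↦ f_{Y|X}(y|x)`
is continuous provided `f_{ε|X}` is jointly continuous. -/
theorem conditional_density_of_monotone_transform
    (I : Set ℝ)
    (fe : ℝ → ℝ → ℝ)         -- conditional density f_{ε|X}(e|x)
    (hfe_nonneg : ∀ e x, 0 ≤ fe e x)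
    (hfe_cont : Continuous fun q : ℝ × ℝ => fe q.1 q.2)
    (h he : ℝ → ℝ → ℝ)        -- h(x,e) and ∂ₑh(x,e)
    (c : ℝ) (hc : 0 < c)
    (hderiv : ∀ x ∈ I, ∀ e, HasDerivAt (fun e' => h x e') (he x e) e)
    (hhe_lb : ∀ x ∈ I, ∀ e, c ≤ he x e)
    (hhe_cont : Continuous fun q : ℝ × ℝ => he q.1 q.2)
    (hh_cont : Continuous fun q : ℝ × ℝ => h q.1 q.2)
    (hmono : ∀ x ∈ I, StrictMono (h x))
    (hinv : ℝ → ℝ → ℝ)        -- inverse e = h⁻¹(x,y)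
    (hinv_left : ∀ x ∈ I, ∀ e, hinv x (h x e) = e)
    (hinv_right : ∀ x ∈ I, ∀ y, h x (hinv x y) = y)
    (fY : ℝ → ℝ → ℝ)
    (hfY : ∀ y x, fY y x = fe (hinv x y) x / he x (hinv x y)) :
    (∀ x ∈ I,
      Measure.map (h x) (volume.withDensity (fun e => ENNReal.ofReal (fe e x)))
        = volume.withDensity (fun y => ENNReal.ofReal (fY y x))) ∧
    ContinuousOn (fun q : ℝ × ℝ => fY q.1 q.2) (Set.univ ×ˢ I) := by
  have hhx_cont : ∀ x : ℝ, Continuous (h x) := fun x =>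
    hh_cont.comp (Continuous.prodMk_right x)
  -- expansion estimate: c * |a - b| ≤ |h x a - h x b| for x ∈ I
  have hexp : ∀ x ∈ I, ∀ a b : ℝ, c * |a - b| ≤ |h x a - h x b| := by
    intro x hx a b
    have hd : ∀ e : ℝ, HasDerivAt (fun e' => h x e' - c * e') (he x e - c) e := by
      intro e
      exact ((hderiv x hx e).sub ((hasDerivAt_id e).const_mul c)).congr_deriv (by simp)
    have hgm : Monotone (fun e => h x e - c * e) := by
      apply monotone_of_deriv_nonneg
      · exact fun e => (hd e).differentiableAt
      · intro e
        rw [(hd e).deriv]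
        linarith [hhe_lb x hx e]
    rcases le_total a b with hab | hab
    · have h1 := hgm hab
      simp only at h1
      have h2 : h x a ≤ h x b := (hmono x hx).monotone hab
      rw [abs_sub_comm a b, abs_sub_comm (h x a) (h x b), abs_of_nonneg (by linarith), abs_of_nonneg (by linarith)]
      linarith
    · have h1 := hgm hab
      simp only at h1
      have h2 : h x b ≤ h x a := (hmono x hx).monotone hab
      rw [abs_of_nonneg (by linarith), abs_of_nonneg (by linarith)]
      linarith
  -- continuity of the inverse
  have hinv_contOn : ContinuousOn (fun q : ℝ × ℝ => hinv q.2 q.1) (Set.univ ×ˢ I) := by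
    rintro ⟨y0, x0⟩ ⟨-, hx0⟩
    set e0 := hinv x0 y0 with he0
    have key : ∀ q : ℝ × ℝ, q ∈ Set.univ ×ˢ I →
        dist (hinv q.2 q.1) e0 ≤ |q.1 - h q.2 e0| / c := by
      rintro ⟨y, x⟩ ⟨-, hx⟩
      have hb := hexp x hx (hinv x y) e0
      rw [hinv_right x hx y] at hb
      rw [Real.dist_eq, le_div_iff₀ hc]
      linarith
    have hbt : Filter.Tendsto (fun q : ℝ × ℝ => |q.1 - h q.2 e0| / c)
        (nhdsWithin (y0, x0) (Set.univ ×ˢ I)) (nhds 0) := by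
      have hcont : Continuous (fun q : ℝ × ℝ => |q.1 - h q.2 e0| / c) := by
        apply Continuous.div_const
        exact (continuous_fst.sub (hh_cont.comp
          (continuous_snd.prodMk continuous_const))).abs
      have hval : |((y0, x0) : ℝ × ℝ).1 - h ((y0, x0) : ℝ × ℝ).2 e0| / c = 0 := by
        simp [he0, hinv_right x0 hx0 y0]
      have := (hcont.tendsto (y0, x0)).mono_left
        (nhdsWithin_le_nhds (s := Set.univ ×ˢ I))
      rwa [hval] at this
    rw [ContinuousWithinAt, tendsto_iff_dist_tendsto_zero]
    exact squeeze_zero' (Filter.Eventually.of_forall (fun q => dist_nonneg))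
      (Filter.eventually_of_mem self_mem_nhdsWithin key) hbt
  refine ⟨?_, ?_⟩
  · intro x hx
    have hmeas : Measurable (h x) := (hhx_cont x).measurable
    ext s hs
    rw [Measure.map_apply hmeas hs, withDensity_apply _ hs, withDensity_apply _ (hmeas hs)]
    have hsurj : Function.Surjective (h x) := fun y => ⟨hinv x y, hinv_right x hx y⟩
    have hinj : Function.Injective (h x) := (hmono x hx).injective
    have himg : s = h x '' (h x ⁻¹' s) := (Set.image_preimage_eq s hsurj).symm
    have hps : MeasurableSet (h x ⁻¹' s) := hmeas hs
    calc ∫⁻ e in h x ⁻¹' s, ENNReal.ofReal (fe e x)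
        = ∫⁻ e in h x ⁻¹' s,
            ENNReal.ofReal |he x e| * ENNReal.ofReal (fY (h x e) x) := by
          apply setLIntegral_congr_fun hps
          intro e _
          beta_reduce
          have hhe_pos : 0 < he x e := lt_of_lt_of_le hc (hhe_lb x hx e)
          rw [hfY (h x e) x, hinv_left x hx e, abs_of_pos hhe_pos,
            ← ENNReal.ofReal_mul (le_of_lt hhe_pos),
            mul_div_cancel₀ _ (ne_of_gt hhe_pos)]
      _ = ∫⁻ y in h x '' (h x ⁻¹' s), ENNReal.ofReal (fY y x) := by
          rw [lintegral_image_eq_lintegral_abs_deriv_mul' hps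
            (fun e _ => (hderiv x hx e).hasDerivWithinAt) (hinj.injOn)]
      _ = ∫⁻ y in s, ENNReal.ofReal (fY y x) := by rw [← himg]
  · have h1 : ContinuousOn (fun q : ℝ × ℝ => fe (hinv q.2 q.1) q.2) (Set.univ ×ˢ I) :=
      hfe_cont.comp_continuousOn (hinv_contOn.prodMk continuousOn_snd)
    have h2 : ContinuousOn (fun q : ℝ × ℝ => he q.2 (hinv q.2 q.1)) (Set.univ ×ˢ I) :=
      hhe_cont.comp_continuousOn (continuousOn_snd.prodMk hinv_contOn)
    have h3 : ∀ q ∈ Set.univ ×ˢ I, he q.2 (hinv q.2 q.1) ≠ 0 := fun q hq =>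
      ne_of_gt (lt_of_lt_of_le hc (hhe_lb q.2 hq.2 _))
    refine (h1.div h2 h3).congr ?_
    intro q _
    exact hfY q.1 q.2
end
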